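/- Let I be an independence model over a finite vertex set V, let G_F be a maximal ancestral graph (MAG) over V satisfying the Markov and Faithfulness assumptions with I, and let π = (V0, V1, ..., Vm = X, Z, Y) with m ≥ 1 be a discriminating path for ⟨X,Z,Y⟩ in G_F. Let G_A be a MAG over V satisfying the Markov assumption with I in which the corresponding vertex sequence (V0, V1, ..., Vm = X, Z, Y) also forms a discriminating path π* for ⟨X,Z,Y⟩. Then Z is a collider on π in G_F if and only if Z is a collider on π* in G_A. -/

import Mathlib

/-- The kind of an edge as traversed from left to right along a path:
forward directed (`a → b`), backward directed (`a ← b`), or bidirected (`a ↔ b`). -/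
inductive EKind : Type
  | fwd | bwd | bi
deriving DecidableEq, Inhabited

/-- The edge kind has an arrowhead at its left endpoint. -/
def EKind.arrowLeft : EKind → Prop
  | .fwd => False
  | .bwd => True
  | .bi  => True

/-- The edge kind has an arrowhead at its right endpoint. -/
def EKind.arrowRight : EKind → Prop
  | .fwd => True
  | .bwd => False
  | .bi  => True

/-- A mixed graph over a vertex type `V`: a set of directed edges and a set of
bidirected edges between distinct vertices. -/
structure MGraph (V : Type) where
  dir : V → V → Prop
  bidir : V → V → Prop
  dir_irrefl : ∀ x, ¬ dir x x
  bidir_irrefl : ∀ x, ¬ bidir x x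
  bidir_symm : ∀ x y, bidir x y → bidir y x

namespace MGraph

variable {V : Type}

/-- There is an edge of the given kind (read left-to-right) between `a` and `b`. -/
def edgeKind (G : MGraph V) : EKind → V → V → Prop
  | .fwd, a, b => G.dir a b
  | .bwd, a, b => G.dir b a
  | .bi,  a, b => G.bidir a b

/-- `x` is an ancestor of `y`: `x = y` or there is a directed path from `x` to `y`. -/
def Ancestor (G : MGraph V) : V → V → Prop := Relation.ReflTransGen G.dir

/-- The graph has no directed cycle. -/
def Acyclic (G : MGraph V) : Prop := ∀ x y, G.Ancestor x y → G.Ancestor y x → x = y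

/-- `x` and `y` are adjacent: some edge joins them. -/
def Adj (G : MGraph V) (x y : V) : Prop := G.dir x y ∨ G.dir y x ∨ G.bidir x y

/-- A path between `x` and `y`: a sequence of distinct vertices starting at `x` and
ending at `y`, together with, for each consecutive pair, an edge of the graph between
them (recorded by its kind). -/
structure Path (G : MGraph V) (x y : V) : Type where
  verts : List V
  kinds : List EKind
  len_eq : verts.length = kinds.length + 1
  nodup : verts.Nodup
  head_eq : verts.head? = some x
  last_eq : verts.getLast? = some y
  valid : ∀ i, i < kinds.length →
    G.edgeKind (kinds.getD i .fwd) (verts.getD i x) (verts.getD (i + 1) x)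

namespace Path

variable {G : MGraph V} {x y : V}

/-- The `i`-th vertex on the path. -/
def vert (p : G.Path x y) (i : ℕ) : V := p.verts.getD i x

/-- The kind of the `i`-th edge on the path. -/
def kind (p : G.Path x y) (i : ℕ) : EKind := p.kinds.getD i .fwd

/-- The (non-endpoint) vertex at position `i` is a collider on the path: both incident
edges have an arrowhead at it. -/
def ColliderAt (p : G.Path x y) (i : ℕ) : Prop :=
  1 ≤ i ∧ i + 1 < p.verts.length ∧
    (p.kind (i - 1)).arrowRight ∧ (p.kind i).arrowLeft

/-- The path is m-connecting given `Z`: every non-collider on it is not in `Z` and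
every collider on it has a descendant in `Z`. -/
def MConn (p : G.Path x y) (Z : Set V) : Prop :=
  ∀ i, 1 ≤ i → i + 1 < p.verts.length →
    (p.ColliderAt i → ∃ d ∈ Z, G.Ancestor (p.vert i) d) ∧
    (¬ p.ColliderAt i → p.vert i ∉ Z)

/-- The path is an inducing path: every non-endpoint vertex is a collider on the path
and an ancestor of one of the endpoints. -/
def Inducing (p : G.Path x y) : Prop :=
  ∀ i, 1 ≤ i → i + 1 < p.verts.length →
    p.ColliderAt i ∧ (G.Ancestor (p.vert i) x ∨ G.Ancestor (p.vert i) y)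

end Path

/-- Distinct vertices `x, y ∉ Z` are m-separated by `Z`: no path between them is
m-connecting given `Z`. -/
def MSep (G : MGraph V) (x y : V) (Z : Set V) : Prop :=
  x ≠ y ∧ x ∉ Z ∧ y ∉ Z ∧
    (∀ p : G.Path x y, ¬ p.MConn Z) ∧ (∀ p : G.Path y x, ¬ p.MConn Z)

/-- Sets `A` and `B` are m-separated by `C`: every `a ∈ A` and `b ∈ B` are. -/
def MSepSets (G : MGraph V) (A B C : Set V) : Prop :=
  ∀ a ∈ A, ∀ b ∈ B, G.MSep a b C

/-- `x` and `y` are virtually adjacent: there is an inducing path between them. -/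
def VAdj (G : MGraph V) (x y : V) : Prop :=
  x ≠ y ∧ ((∃ p : G.Path x y, p.Inducing) ∨ (∃ p : G.Path y x, p.Inducing))

/-- The graph `M` corresponding to an SMCM `S`: distinct `x, y` are adjacent in `M`
iff there is an inducing path between them in `S`, with the edge oriented `x → y` if
`x` is an ancestor of `y` in `S`, `y → x` if `y` is an ancestor of `x` in `S`, and
`x ↔ y` otherwise. -/
def mag (S : MGraph V) : MGraph V where
  dir x y := S.VAdj x y ∧ S.Ancestor x y
  bidir x y := S.VAdj x y ∧ ¬ S.Ancestor x y ∧ ¬ S.Ancestor y x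
  dir_irrefl := fun x h => h.1.1 rfl
  bidir_irrefl := fun x h => h.1.1 rfl
  bidir_symm := fun _ _ h => ⟨⟨h.1.1.symm, h.1.2.symm⟩, h.2.2, h.2.1⟩

/-- An ancestral graph: at most one edge between any two vertices, and whenever `x`
is an ancestor of `y`, no edge between `x` and `y` has an arrowhead at `x`. -/
def Ancestral (G : MGraph V) : Prop :=
  (∀ x y, G.Ancestor x y → x ≠ y → ¬ G.dir y x ∧ ¬ G.bidir x y) ∧
  (∀ x y, ¬ (G.dir x y ∧ G.bidir x y))

/-- A maximal ancestral graph: an ancestral graph in which every pair of non-adjacent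
vertices is m-separated by some subset of the remaining vertices. -/
def IsMAG (G : MGraph V) : Prop :=
  G.Ancestral ∧ ∀ x y : V, x ≠ y → ¬ G.Adj x y →
    ∃ Z : Set V, x ∉ Z ∧ y ∉ Z ∧ G.MSep x y Z

/-- The number of edges of a mixed graph (directed edges plus bidirected edges, the
latter counted as unordered pairs). -/
noncomputable def numEdges (G : MGraph V) : ℕ :=
  {p : V × V | G.dir p.1 p.2}.ncard +
    {e : Sym2 V | ∃ a b, e = s(a, b) ∧ G.bidir a b}.ncard

/-- The number of virtual adjacencies (unordered pairs of virtually adjacent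
vertices). -/
noncomputable def numVAdj (G : MGraph V) : ℕ :=
  {e : Sym2 V | ∃ a b, e = s(a, b) ∧ G.VAdj a b}.ncard

/-- The number of m-separation statements entailed by the graph: triples `(X, Y, Z)`
of pairwise disjoint subsets with `X, Y` nonempty such that `X` and `Y` are
m-separated by `Z`. -/
noncomputable def numSep (G : MGraph V) : ℕ :=
  {t : Set V × Set V × Set V | t.1.Nonempty ∧ t.2.1.Nonempty ∧
    Disjoint t.1 t.2.1 ∧ Disjoint t.1 t.2.2 ∧ Disjoint t.2.1 t.2.2 ∧
    G.MSepSets t.1 t.2.1 t.2.2}.ncard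

/-- An unshielded triple `⟨a, z, b⟩`: `a, z` adjacent, `z, b` adjacent, `a, b` not
adjacent. -/
def UnshieldedTriple (G : MGraph V) (a z b : V) : Prop :=
  a ≠ z ∧ z ≠ b ∧ a ≠ b ∧ G.Adj a z ∧ G.Adj z b ∧ ¬ G.Adj a b

/-- Some edge between `a` and `z` has an arrowhead at `z`. -/
def ArrowAt (G : MGraph V) (a z : V) : Prop := G.dir a z ∨ G.bidir a z

/-- An unshielded collider: an unshielded triple whose two edges both have arrowheads
at the middle vertex. -/
def UnshieldedCollider (G : MGraph V) (a z b : V) : Prop :=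
  G.UnshieldedTriple a z b ∧ G.ArrowAt a z ∧ G.ArrowAt b z

/-- A discriminating path for `⟨X, Z, Y⟩`: a path `(V₀, V₁, ..., Vₘ = X, Z, Y)` with
`m ≥ 1` such that `V₀` and `Y` are not adjacent and every `Vᵢ` with `1 ≤ i ≤ m` is a
collider on the path and a parent of `Y`. -/
def IsDiscriminating (G : MGraph V) {v₀ w : V} (p : G.Path v₀ w) (X Z Y : V) : Prop :=
  4 ≤ p.verts.length ∧ w = Y ∧
  p.vert (p.verts.length - 3) = X ∧
  p.vert (p.verts.length - 2) = Z ∧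
  v₀ ≠ Y ∧ ¬ G.Adj v₀ Y ∧
  ∀ i, 1 ≤ i → i ≤ p.verts.length - 3 → p.ColliderAt i ∧ G.dir (p.vert i) Y

end MGraph

/-- An independence model over `V`: a set of triples `(X, Y, Z)` of pairwise disjoint
subsets of `V` with `X, Y` nonempty. -/
def IsIndepModel {V : Type} (I : Set (Set V × Set V × Set V)) : Prop :=
  ∀ t ∈ I, t.1.Nonempty ∧ t.2.1.Nonempty ∧
    Disjoint t.1 t.2.1 ∧ Disjoint t.1 t.2.2 ∧ Disjoint t.2.1 t.2.2

/-- `G` satisfies the Markov assumption with `I`: every triple `(X, Y, Z)` such that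
`X` and `Y` are m-separated by `Z` in `G` belongs to `I`. -/
def Markov {V : Type} (G : MGraph V) (I : Set (Set V × Set V × Set V)) : Prop :=
  ∀ X Y Z : Set V, X.Nonempty → Y.Nonempty →
    Disjoint X Y → Disjoint X Z → Disjoint Y Z →
    G.MSepSets X Y Z → (X, Y, Z) ∈ I

/-- `G` satisfies the Faithfulness assumption with `I`: every triple in `I` is
m-separated in `G`. -/
def Faithful {V : Type} (G : MGraph V) (I : Set (Set V × Set V × Set V)) : Prop :=
  ∀ X Y Z : Set V, (X, Y, Z) ∈ I → G.MSepSets X Y Z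

/-- `G` satisfies the Adjacency-faithfulness assumption with `I`: for adjacent
distinct `x, y` and any `Z ⊆ V ∖ {x, y}`, the triple `({x}, {y}, Z)` is not in `I`. -/
def AdjFaithful {V : Type} (G : MGraph V) (I : Set (Set V × Set V × Set V)) : Prop :=
  ∀ x y : V, x ≠ y → G.Adj x y →
    ∀ Z : Set V, x ∉ Z → y ∉ Z → ({x}, {y}, Z) ∉ I

/-- `G` satisfies the V-adjacency-faithfulness assumption with `I`: for virtually
adjacent `x, y` and any `Z ⊆ V ∖ {x, y}`, the triple `({x}, {y}, Z)` is not in `I`. -/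
def VAdjFaithful {V : Type} (G : MGraph V) (I : Set (Set V × Set V × Set V)) : Prop :=
  ∀ x y : V, G.VAdj x y →
    ∀ Z : Set V, x ∉ Z → y ∉ Z → ({x}, {y}, Z) ∉ I

/-- A MAG `G` is NoE-minimal with `I`: no MAG over `V` with strictly fewer edges
satisfies the Markov assumption with `I`. -/
def NoEMinimalMAG {V : Type} (G : MGraph V) (I : Set (Set V × Set V × Set V)) : Prop :=
  ¬ ∃ G' : MGraph V, G'.IsMAG ∧ G'.numEdges < G.numEdges ∧ Markov G' I

/-- An SMCM `G` is NoE-minimal with `I`: no SMCM over `V` with strictly fewer edges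
satisfies the Markov assumption with `I`. -/
def NoEMinimalSMCM {V : Type} (G : MGraph V) (I : Set (Set V × Set V × Set V)) : Prop :=
  ¬ ∃ G' : MGraph V, G'.Acyclic ∧ G'.numEdges < G.numEdges ∧ Markov G' I

/-- An SMCM `G` is V-adjacency-minimal with `I`: no SMCM over `V` with strictly fewer
virtual adjacencies satisfies the Markov assumption with `I`. -/
def VAdjMinimal {V : Type} (G : MGraph V) (I : Set (Set V × Set V × Set V)) : Prop :=
  ¬ ∃ G' : MGraph V, G'.Acyclic ∧ G'.numVAdj < G.numVAdj ∧ Markov G' I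

/-- A MAG `G` is NoI-minimal with `I`: no MAG over `V` entailing strictly more
m-separation statements satisfies the Markov assumption with `I`. -/
def NoIMinimalMAG {V : Type} (G : MGraph V) (I : Set (Set V × Set V × Set V)) : Prop :=
  ¬ ∃ G' : MGraph V, G'.IsMAG ∧ G.numSep < G'.numSep ∧ Markov G' I

/-- An SMCM `G` is NoI-minimal with `I`: no SMCM over `V` entailing strictly more
m-separation statements satisfies the Markov assumption with `I`. -/
def NoIMinimalSMCM {V : Type} (G : MGraph V) (I : Set (Set V × Set V × Set V)) : Prop :=
  ¬ ∃ G' : MGraph V, G'.Acyclic ∧ G.numSep < G'.numSep ∧ Markov G' I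


section Aux

private lemma List.getD_take' {α : Type*} {l : List α} {k j : ℕ} (d : α)
    (h : j < k) (h2 : j < l.length) : (l.take k).getD j d = l.getD j d := by
  rw [List.getD_eq_getElem _ _ (by simp only [List.length_take]; omega),
    List.getElem_take, List.getD_eq_getElem _ _ h2]

namespace MGraph

namespace Path

variable {V : Type} {G : MGraph V} {v₀ Y : V}

lemma length_pos (p : G.Path v₀ Y) : 0 < p.verts.length := by
  have := p.len_eq; omega

lemma vert_eq_getElem (p : G.Path v₀ Y) {i : ℕ} (h : i < p.verts.length) :
    p.vert i = p.verts[i] := List.getD_eq_getElem _ _ h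

lemma getElem_zero (p : G.Path v₀ Y) : p.verts[0]'(p.length_pos) = v₀ := by
  have h := p.head_eq
  rw [List.head?_eq_getElem?, List.getElem?_eq_getElem p.length_pos, Option.some_inj] at h
  exact h

lemma getElem_last (p : G.Path v₀ Y) :
    p.verts[p.verts.length - 1]'(by have := p.length_pos; omega) = Y := by
  have h := p.last_eq
  rw [List.getLast?_eq_getElem?,
    List.getElem?_eq_getElem (by have := p.length_pos; omega), Option.some_inj] at h
  exact h

/-- The truncated path `(v₀, ..., Vᵢ, Y)` obtained from `p` using the edge `Vᵢ → Y`. -/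
def trunc (p : G.Path v₀ Y) (i : ℕ) (h1 : 1 ≤ i) (h2 : i + 3 ≤ p.verts.length)
    (hdir : G.dir (p.vert i) Y) : G.Path v₀ Y where
  verts := p.verts.take (i + 1) ++ [Y]
  kinds := p.kinds.take i ++ [.fwd]
  len_eq := by
    have := p.len_eq
    simp only [List.length_append, List.length_take, List.length_cons, List.length_nil]
    omega
  nodup := by
    have hY : Y ∉ p.verts.take (i + 1) := by
      intro hm
      obtain ⟨j, hj, hje⟩ := List.getElem_of_mem hm
      rw [List.getElem_take] at hje
      have hjt : j < i + 1 := by simp only [List.length_take] at hj; omega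
      have hjlen : j < p.verts.length := by omega
      have hlast : p.verts[p.verts.length - 1]'(by omega) = Y := p.getElem_last
      have : j = p.verts.length - 1 :=
        (p.nodup.getElem_inj_iff).mp (by rw [hje, hlast])
      omega
    simp only [List.nodup_append, List.nodup_cons, List.not_mem_nil, not_false_iff,
      List.nodup_nil, and_true, true_and]
    exact ⟨p.nodup.sublist (List.take_sublist _ _), by
      intro a ha b hb
      simp only [List.mem_singleton] at hb
      subst hb; exact fun h => hY (h ▸ ha)⟩
  head_eq := by
    have hl : 0 < (p.verts.take (i + 1)).length := by
      have := p.len_eq; simp only [List.length_take]; omega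
    rw [List.head?_eq_getElem?,
      List.getElem?_eq_getElem (by simp only [List.length_append]; omega), Option.some_inj,
      List.getElem_append_left hl, List.getElem_take]
    exact p.getElem_zero
  last_eq := List.getLast?_concat
  valid := by
    have hkl : p.kinds.length = p.verts.length - 1 := by have := p.len_eq; omega
    have hlt : (p.kinds.take i).length = i := by simp only [List.length_take]; omega
    have hvt : (p.verts.take (i + 1)).length = i + 1 := by
      simp only [List.length_take]; omega
    intro j hj
    simp only [List.length_append, hlt, List.length_cons, List.length_nil] at hj
    have hgv : ∀ k, k ≤ i → (p.verts.take (i + 1) ++ [Y]).getD k v₀ = p.vert k := by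
      intro k hk
      rw [List.getD_append _ _ _ _ (by omega), List.getD_take' _ (by omega) (by omega)]
      rfl
    rcases lt_or_eq_of_le (Nat.lt_succ_iff.mp hj) with hji | hji
    · have hk : (p.kinds.take i ++ [EKind.fwd]).getD j .fwd = p.kind j := by
        rw [List.getD_append _ _ _ _ (by omega), List.getD_take' _ (by omega) (by omega)]
        rfl
      rw [hk, hgv j (by omega), hgv (j + 1) (by omega)]
      exact p.valid j (by omega)
    · have hk : (p.kinds.take i ++ [EKind.fwd]).getD j .fwd = .fwd := by
        rw [List.getD_append_right _ _ _ _ (by omega)]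
        simp [hlt, hji]
      have hv : (p.verts.take (i + 1) ++ [Y]).getD (j + 1) v₀ = Y := by
        rw [List.getD_append_right _ _ _ _ (by omega)]
        simp [hvt, hji]
      rw [hk, hgv j (by omega), hv, hji]
      exact hdir

lemma trunc_length (p : G.Path v₀ Y) (i : ℕ) (h1 : 1 ≤ i) (h2 : i + 3 ≤ p.verts.length)
    (hdir : G.dir (p.vert i) Y) : (p.trunc i h1 h2 hdir).verts.length = i + 2 := by
  simp only [trunc, List.length_append, List.length_take, List.length_cons, List.length_nil]
  omega

lemma trunc_vert (p : G.Path v₀ Y) (i : ℕ) (h1 : 1 ≤ i) (h2 : i + 3 ≤ p.verts.length)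
    (hdir : G.dir (p.vert i) Y) {j : ℕ} (hj : j ≤ i) :
    (p.trunc i h1 h2 hdir).vert j = p.vert j := by
  have hvt : (p.verts.take (i + 1)).length = i + 1 := by
    have := p.len_eq; simp only [List.length_take]; omega
  show (p.verts.take (i + 1) ++ [Y]).getD j v₀ = p.vert j
  rw [List.getD_append _ _ _ _ (by omega), List.getD_take' _ (by omega) (by omega)]
  rfl

lemma trunc_kind (p : G.Path v₀ Y) (i : ℕ) (h1 : 1 ≤ i) (h2 : i + 3 ≤ p.verts.length)
    (hdir : G.dir (p.vert i) Y) {j : ℕ} (hj : j < i) :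
    (p.trunc i h1 h2 hdir).kind j = p.kind j := by
  have hkl : p.kinds.length = p.verts.length - 1 := by have := p.len_eq; omega
  have hlt : (p.kinds.take i).length = i := by simp only [List.length_take]; omega
  show (p.kinds.take i ++ [EKind.fwd]).getD j .fwd = p.kind j
  rw [List.getD_append _ _ _ _ (by omega), List.getD_take' _ (by omega) (by omega)]
  rfl

lemma trunc_kind_last (p : G.Path v₀ Y) (i : ℕ) (h1 : 1 ≤ i) (h2 : i + 3 ≤ p.verts.length)
    (hdir : G.dir (p.vert i) Y) : (p.trunc i h1 h2 hdir).kind i = .fwd := by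
  have hkl : p.kinds.length = p.verts.length - 1 := by have := p.len_eq; omega
  have hlt : (p.kinds.take i).length = i := by simp only [List.length_take]; omega
  show (p.kinds.take i ++ [EKind.fwd]).getD i .fwd = .fwd
  rw [List.getD_append_right _ _ _ _ (by omega)]
  simp [hlt]

lemma trunc_mconn (p : G.Path v₀ Y) (i : ℕ) (h1 : 1 ≤ i) (h2 : i + 3 ≤ p.verts.length)
    (hdir : G.dir (p.vert i) Y) (S : Set V)
    (hS : ∀ j, 1 ≤ j → j < i → p.vert j ∈ S)
    (hcol : ∀ j, 1 ≤ j → j < i → p.ColliderAt j)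
    (hiS : p.vert i ∉ S) :
    (p.trunc i h1 h2 hdir).MConn S := by
  intro j hj1 hj2
  rw [trunc_length] at hj2
  have hji : j ≤ i := by omega
  rcases lt_or_eq_of_le hji with hlt | heq
  · have hc := hcol j hj1 hlt
    have hcq : (p.trunc i h1 h2 hdir).ColliderAt j := by
      refine ⟨hj1, by rw [trunc_length]; omega, ?_, ?_⟩
      · rw [trunc_kind _ _ _ _ _ (by omega)]; exact hc.2.2.1
      · rw [trunc_kind _ _ _ _ _ hlt]; exact hc.2.2.2
    refine ⟨fun _ => ⟨p.vert j, hS j hj1 hlt, ?_⟩, fun hnc => absurd hcq hnc⟩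
    rw [trunc_vert _ _ _ _ _ (by omega : j ≤ i)]
    exact Relation.ReflTransGen.refl
  · subst heq
    have hnc : ¬ (p.trunc j h1 h2 hdir).ColliderAt j := by
      intro hc
      have := hc.2.2.2
      rw [trunc_kind_last] at this
      exact this
    refine ⟨fun hc => absurd hc hnc, fun _ => ?_⟩
    rw [trunc_vert _ _ _ _ _ le_rfl]
    exact hiS

lemma disc_mem_sep (p : G.Path v₀ Y) (S : Set V)
    (hsep : ∀ q : G.Path v₀ Y, ¬ q.MConn S)
    (hdc : ∀ j, 1 ≤ j → j ≤ p.verts.length - 3 → p.ColliderAt j ∧ G.dir (p.vert j) Y)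
    (hn : 4 ≤ p.verts.length) :
    ∀ j, 1 ≤ j → j ≤ p.verts.length - 3 → p.vert j ∈ S := by
  intro j
  induction j using Nat.strong_induction_on with
  | _ j ih =>
    intro hj1 hj3
    by_contra hjS
    have h2 : j + 3 ≤ p.verts.length := by omega
    exact hsep (p.trunc j hj1 h2 (hdc j hj1 hj3).2)
      (trunc_mconn p j hj1 h2 (hdc j hj1 hj3).2 S
        (fun k hk1 hklt => ih k hklt hk1 (by omega))
        (fun k hk1 hklt => (hdc k hk1 (by omega)).1) hjS)

lemma disc_collider_iff (p : G.Path v₀ Y) (S : Set V)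
    (hsep : ∀ q : G.Path v₀ Y, ¬ q.MConn S)
    (hdc : ∀ j, 1 ≤ j → j ≤ p.verts.length - 3 → p.ColliderAt j ∧ G.dir (p.vert j) Y)
    (hn : 4 ≤ p.verts.length) :
    p.ColliderAt (p.verts.length - 2) ↔ p.vert (p.verts.length - 2) ∉ S := by
  have hmem := disc_mem_sep p S hsep hdc hn
  have hbody : ∀ (_ : p.ColliderAt (p.verts.length - 2) →
        (∃ d ∈ S, G.Ancestor (p.vert (p.verts.length - 2)) d))
      (_ : ¬ p.ColliderAt (p.verts.length - 2) → p.vert (p.verts.length - 2) ∉ S),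
      p.MConn S := by
    intro hend hend2 j hj1 hj2
    by_cases hji : j ≤ p.verts.length - 3
    · have hc := hdc j hj1 hji
      exact ⟨fun _ => ⟨p.vert j, hmem j hj1 hji, Relation.ReflTransGen.refl⟩,
        fun hnc => absurd hc.1 hnc⟩
    · have hje : j = p.verts.length - 2 := by omega
      subst hje
      exact ⟨hend, hend2⟩
  constructor
  · intro hc hZ
    exact hsep p (hbody (fun _ => ⟨p.vert (p.verts.length - 2), hZ,
      Relation.ReflTransGen.refl⟩) (fun hnc => absurd hc hnc))
  · intro hZ
    by_contra hc
    exact hsep p (hbody (fun h => absurd h hc) (fun _ => hZ))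

end Path

end MGraph

end Aux

/-- Let `G_F` be a MAG satisfying Markov and Faithfulness with `I` and
let `π` be a discriminating path for `⟨X, Z, Y⟩` in `G_F`. Let `G_A` be a MAG
satisfying Markov with `I` in which the same vertex sequence forms a discriminating
path `π*` for `⟨X, Z, Y⟩`. Then `Z` is a collider on `π` in `G_F` iff `Z` is a
collider on `π*` in `G_A`. -/
theorem statement_5 {V : Type} [Fintype V] [DecidableEq V]
    (I : Set (Set V × Set V × Set V)) (hI : IsIndepModel I)
    (GF : MGraph V) (hGF : GF.IsMAG) (hMF : Markov GF I) (hFF : Faithful GF I)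
    (GA : MGraph V) (hGA : GA.IsMAG) (hMA : Markov GA I)
    (v₀ w X Z Y : V)
    (pF : GF.Path v₀ w) (hdF : GF.IsDiscriminating pF X Z Y)
    (pA : GA.Path v₀ w) (hverts : pA.verts = pF.verts)
    (hdA : GA.IsDiscriminating pA X Z Y) :
    (pF.ColliderAt (pF.verts.length - 2) ↔ pA.ColliderAt (pA.verts.length - 2)) := by
  obtain ⟨hlenF, rfl, hXF, hZF, hneF, hnadjF, hdcF⟩ := hdF
  obtain ⟨hlenA, -, hXA, hZA, hneA, hnadjA, hdcA⟩ := hdA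
  obtain ⟨S, hv0S, hwS, hsepA⟩ := hGA.2 v₀ w hneA hnadjA
  have hInI : (({v₀} : Set V), ({w} : Set V), S) ∈ I := by
    refine hMA {v₀} {w} S ⟨v₀, rfl⟩ ⟨w, rfl⟩ ?_ ?_ ?_ ?_
    · simpa [Set.disjoint_singleton] using hneA
    · simpa [Set.disjoint_singleton_left] using hv0S
    · simpa [Set.disjoint_singleton_left] using hwS
    · intro a ha b hb
      rw [Set.mem_singleton_iff] at ha hb
      subst ha; subst hb; exact hsepA
  have hsepF : GF.MSep v₀ w S := hFF {v₀} {w} S hInI v₀ rfl w rfl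
  have hF := MGraph.Path.disc_collider_iff pF S hsepF.2.2.2.1 hdcF hlenF
  have hA := MGraph.Path.disc_collider_iff pA S hsepA.2.2.2.1 hdcA hlenA
  rw [hZF] at hF
  rw [hZA] at hA
  exact hF.trans hA.symm
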